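/- The unit square minimizes J(Ω) = λ₁(Ω)/h₁(Ω)² among all rectangles: for all a, b > 0, π²(1/a²+1/b²) · (a + b - √((a-b)² + πab))²/(4-π)² ≥ 2π²(2-√π)²/(4-π)², with equality iff a = b. -/

import Mathlib

/-!
Put `s = a + b`, `t = √((a - b)² + π a b)` and `q = √π`. Since `(s - t)(s + t) = (4 - π) a b`, the
ratio `(1/a² + 1/b²)(s - t)²` equals `(4 - π)((2 - π)s² + 2t²)/(s + t)²`, a function of `t / s` alone,
and its excess over the square's value `2(2 - q)²` factors as
`(2 - q)(2t - q s)(2q t + (π + 2q - 4)s)/(s + t)²`.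
Here `4t² - π s² = (4 - π)(a - b)² ≥ 0`, so the middle factor vanishes exactly when `a = b`,
and the other two are positive because `1 < π < 4`.
-/

open Real

/-- `J((0,a) × (0,b)) = π² / (4 - π)² * rectangleRatio π a b`. -/
noncomputable def rectangleRatio (p a b : ℝ) : ℝ :=
  (1 / a ^ 2 + 1 / b ^ 2) * (a + b - √((a - b) ^ 2 + p * a * b)) ^ 2

section

variable {p a b : ℝ}

theorem rectangleRatio_self (hp : 0 ≤ p) (ha : 0 < a) :
    rectangleRatio p a a = 2 * (2 - √p) ^ 2 := by
  rw [rectangleRatio, show (a - a) ^ 2 + p * a * a = p * a ^ 2 by ring, sqrt_mul hp,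
    sqrt_sq ha.le]
  field_simp
  ring

theorem sqrt_mul_add_lt_two_mul_sqrt (hp : 0 ≤ p) (hp4 : p < 4) (ha : 0 < a) (hb : 0 < b)
    (hab : a ≠ b) : √p * (a + b) < 2 * √((a - b) ^ 2 + p * a * b) := by
  have hgap : 0 < (4 - p) * (a - b) ^ 2 :=
    mul_pos (sub_pos.2 hp4) (sq_pos_of_ne_zero (sub_ne_zero.2 hab))
  rw [← div_lt_iff₀' two_pos, lt_sqrt (by positivity), div_pow, mul_pow, sq_sqrt hp]
  linarith

theorem rectangleRatio_sub_eq (hp : 0 ≤ p) (ha : 0 < a) (hb : 0 < b) :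
    rectangleRatio p a b - 2 * (2 - √p) ^ 2 =
      (2 - √p) * (2 * √((a - b) ^ 2 + p * a * b) - √p * (a + b)) *
          (2 * √p * √((a - b) ^ 2 + p * a * b) + (p + 2 * √p - 4) * (a + b)) /
        (a + b + √((a - b) ^ 2 + p * a * b)) ^ 2 := by
  set t := √((a - b) ^ 2 + p * a * b)
  set q := √p
  have hpq : p = q ^ 2 := (sq_sqrt hp).symm
  have ht : t ^ 2 = (a - b) ^ 2 + p * a * b := sq_sqrt (by positivity)
  have hprod : (a + b - t) * (a + b + t) = (4 - p) * a * b := by linear_combination -ht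
  have hratio : rectangleRatio p a b * (a + b + t) ^ 2 =
      (4 - p) * ((2 - p) * (a + b) ^ 2 + 2 * t ^ 2) :=
    calc rectangleRatio p a b * (a + b + t) ^ 2
        = (1 / a ^ 2 + 1 / b ^ 2) * ((a + b - t) * (a + b + t)) ^ 2 := by
          rw [rectangleRatio]; ring
      _ = (4 - p) ^ 2 * (a ^ 2 + b ^ 2) := by
          rw [hprod]; field_simp; ring
      _ = (4 - p) * ((2 - p) * (a + b) ^ 2 + 2 * t ^ 2) := by
          linear_combination (-2 * (4 - p)) * ht
  rw [eq_div_iff (by positivity), sub_mul, hratio, hpq]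
  ring

theorem two_mul_sq_lt_rectangleRatio (hp1 : 1 < p) (hp4 : p < 4) (ha : 0 < a) (hb : 0 < b)
    (hab : a ≠ b) : 2 * (2 - √p) ^ 2 < rectangleRatio p a b := by
  have hp : 0 ≤ p := by linarith
  have hq1 : 1 < √p := by rwa [lt_sqrt zero_le_one, one_pow]
  have hq2 : √p < 2 := by rwa [sqrt_lt' two_pos, show (2 : ℝ) ^ 2 = 4 by norm_num]
  have hgap := sqrt_mul_add_lt_two_mul_sqrt hp hp4 ha hb hab
  have hcofactor : 0 < 2 * √p * √((a - b) ^ 2 + p * a * b) + (p + 2 * √p - 4) * (a + b) := by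
    nlinarith [sq_sqrt hp]
  rw [← sub_pos, rectangleRatio_sub_eq hp ha hb]
  exact div_pos (mul_pos (mul_pos (sub_pos.2 hq2) (sub_pos.2 hgap)) hcofactor) (by positivity)

end

/-- The unit square minimizes J among rectangles: for all a, b > 0,
π²(1/a²+1/b²)(a+b-√((a-b)²+πab))²/(4-π)² ≥ 2π²(2-√π)²/(4-π)², with equality iff a = b. -/
theorem square_minimizes_J_rectangles (a b : ℝ) (ha : 0 < a) (hb : 0 < b) :
    π ^ 2 * (1 / a ^ 2 + 1 / b ^ 2) *
        (a + b - Real.sqrt ((a - b) ^ 2 + π * a * b)) ^ 2 / (4 - π) ^ 2 ≥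
      2 * π ^ 2 * (2 - Real.sqrt π) ^ 2 / (4 - π) ^ 2 ∧
    (π ^ 2 * (1 / a ^ 2 + 1 / b ^ 2) *
        (a + b - Real.sqrt ((a - b) ^ 2 + π * a * b)) ^ 2 / (4 - π) ^ 2 =
      2 * π ^ 2 * (2 - Real.sqrt π) ^ 2 / (4 - π) ^ 2 ↔ a = b) := by
  have hc : 0 < π ^ 2 / (4 - π) ^ 2 := by have := pi_lt_four; have := pi_pos; positivity
  rw [show π ^ 2 * (1 / a ^ 2 + 1 / b ^ 2) * (a + b - √((a - b) ^ 2 + π * a * b)) ^ 2 /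
      (4 - π) ^ 2 = π ^ 2 / (4 - π) ^ 2 * rectangleRatio π a b by rw [rectangleRatio]; ring,
    show 2 * π ^ 2 * (2 - √π) ^ 2 / (4 - π) ^ 2 = π ^ 2 / (4 - π) ^ 2 * (2 * (2 - √π) ^ 2) by
      ring]
  rcases eq_or_ne a b with rfl | hab
  · simp [rectangleRatio_self pi_pos.le ha]
  · have hlt := mul_lt_mul_of_pos_left
      (two_mul_sq_lt_rectangleRatio (by linarith [pi_gt_three]) pi_lt_four ha hb hab) hc
    exact ⟨hlt.le, iff_of_false hlt.ne' hab⟩
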